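/- In R(E6) ⊂ I_{1,6}, let W_e be the group generated by the reflections in the roots e_1 - e_2 and e_2 - e_3 (a sub-root-system of type A_2). Then the action of W_e on the 72 roots has exactly 31 orbits. -/

import Mathlib

/-- The intersection form on the lattice I_{1,6} = ℤ^7: diag(1,-1,-1,-1,-1,-1,-1). -/
def Ip (x y : Fin 7 → ℤ) : ℤ := x 0 * y 0 - ∑ i : Fin 6, x i.succ * y i.succ

/-- The hyperplane class h = 3e₀ - e₁ - ⋯ - e₆. -/
def hcl : Fin 7 → ℤ := ![3, -1, -1, -1, -1, -1, -1]

/-- The standard basis vector e_i of I_{1,6}. -/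
def ee (i : Fin 7) : Fin 7 → ℤ := fun j => if j = i then 1 else 0

/-- The 72 roots. -/
def Rset : Set (Fin 7 → ℤ) := {α | Ip α α = -2 ∧ Ip α hcl = 0}

/-- The reflection s_a(β) = β + (a·β)a. -/
def pl (a β : Fin 7 → ℤ) : Fin 7 → ℤ := β + Ip a β • a

/-- Reflection in the root e₁ - e₂. -/
def r1 : (Fin 7 → ℤ) → (Fin 7 → ℤ) := pl (ee 1 - ee 2)

/-- Reflection in the root e₂ - e₃. -/
def r2 : (Fin 7 → ℤ) → (Fin 7 → ℤ) := pl (ee 2 - ee 3)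

/-!
The reflections in `e₁ - e₂` and `e₂ - e₃` swap two coordinates, so `W_e` is `S₃` permuting
`e₁, e₂, e₃`. For `α·h = 0` and `a = α₀`, completing the square in Cauchy–Schwarz gives
`∑ᵢ (2αᵢ + a)² = 8 - 2a²` on roots, which confines the roots to the box `|a| ≤ 2`, `|αᵢ| ≤ 1`;
the 31 orbits of the 72 roots in that box are then counted by evaluation. (By Burnside,
`(72 + 3·30 + 2·12)/6 = 31`.)
-/

lemma Ip_sub_left (x y z : Fin 7 → ℤ) : Ip (x - y) z = Ip x z - Ip y z := by
  simp only [Ip, Pi.sub_apply, sub_mul, Finset.sum_sub_distrib]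
  ring

lemma Ip_ee_succ_left (i : Fin 6) (β : Fin 7 → ℤ) : Ip (ee i.succ) β = -β i.succ := by
  simp [Ip, ee, (Fin.succ_ne_zero i).symm]

lemma pl_ee_succ_sub_ee_succ (i j : Fin 6) (β : Fin 7 → ℤ) :
    pl (ee i.succ - ee j.succ) β = β ∘ Equiv.swap i.succ j.succ := by
  funext k
  simp only [pl, Ip_sub_left, Ip_ee_succ_left, Pi.add_apply, Pi.smul_apply, Pi.sub_apply,
    smul_eq_mul, Function.comp_apply, Equiv.swap_apply_def, ee]
  split_ifs <;> simp_all

lemma r1_eq_comp_swap (β : Fin 7 → ℤ) : r1 β = β ∘ Equiv.swap 1 2 := pl_ee_succ_sub_ee_succ 0 1 β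

lemma r2_eq_comp_swap (β : Fin 7 → ℤ) : r2 β = β ∘ Equiv.swap 2 3 := pl_ee_succ_sub_ee_succ 1 2 β

lemma r1_r1 (β : Fin 7 → ℤ) : r1 (r1 β) = β := by
  funext k
  simp [r1_eq_comp_swap]

lemma r2_r2 (β : Fin 7 → ℤ) : r2 (r2 β) = β := by
  funext k
  simp [r2_eq_comp_swap]

lemma r1_r2_r1 (β : Fin 7 → ℤ) : r1 (r2 (r1 β)) = r2 (r1 (r2 β)) := by
  have braid : ∀ k : Fin 7, Equiv.swap 1 2 (Equiv.swap 2 3 (Equiv.swap 1 2 k)) =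
      Equiv.swap 2 3 (Equiv.swap 1 2 (Equiv.swap 2 3 k)) := by decide
  funext k
  simp only [r1_eq_comp_swap, r2_eq_comp_swap, Function.comp_apply, braid]

lemma sum_sq_two_mul_add (α : Fin 7 → ℤ) :
    ∑ i : Fin 6, (2 * α i.succ + α 0) ^ 2 = 4 * α 0 * Ip α hcl - 2 * α 0 ^ 2 - 4 * Ip α α := by
  have hcl_succ : ∀ i : Fin 6, hcl i.succ = -1 := by decide
  simp only [Ip, Fin.sum_univ_six, hcl_succ, show hcl 0 = 3 from rfl]
  ring

def rootBox : Fin 7 → Finset ℤ := Fin.cons {-2, -1, 0, 1, 2} fun _ => {-1, 0, 1}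

def rootFinset : Finset (Fin 7 → ℤ) :=
  (Fintype.piFinset rootBox).filter fun α => Ip α α = -2 ∧ Ip α hcl = 0

lemma mem_piFinset_rootBox {α : Fin 7 → ℤ} (hα : α ∈ Rset) : α ∈ Fintype.piFinset rootBox := by
  obtain ⟨hαα, hαh⟩ := hα
  have hsum : ∑ i : Fin 6, (2 * α i.succ + α 0) ^ 2 = 8 - 2 * α 0 ^ 2 := by
    rw [sum_sq_two_mul_add, hαα, hαh]
    ring
  have hle (i : Fin 6) : (2 * α i.succ + α 0) ^ 2 ≤ 8 - 2 * α 0 ^ 2 :=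
    hsum ▸ Finset.single_le_sum (fun j _ => sq_nonneg (2 * α j.succ + α 0)) (Finset.mem_univ i)
  rw [Fintype.mem_piFinset]
  refine Fin.cases ?_ fun i => ?_
  · have : α 0 ^ 2 ≤ 4 := by nlinarith [hle 0, sq_nonneg (2 * α (Fin.succ 0) + α 0)]
    have : -2 ≤ α 0 ∧ α 0 ≤ 2 := ⟨by nlinarith, by nlinarith⟩
    simp only [rootBox, Fin.cons_zero, Finset.mem_insert, Finset.mem_singleton]
    omega
  · have : α i.succ ^ 2 ≤ 3 := by nlinarith [hle i, sq_nonneg (2 * α i.succ + 3 * α 0)]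
    have : -1 ≤ α i.succ ∧ α i.succ ≤ 1 := ⟨by nlinarith, by nlinarith⟩
    simp only [rootBox, Fin.cons_succ, Finset.mem_insert, Finset.mem_singleton]
    omega

lemma Rset_eq_coe_rootFinset : Rset = rootFinset := by
  ext α
  simp only [rootFinset, Finset.coe_filter]
  exact ⟨fun hα => ⟨mem_piFinset_rootBox hα, hα⟩, fun hα => hα.2⟩

def orbitFinset (α : Fin 7 → ℤ) : Finset (Fin 7 → ℤ) :=
  {α, r1 α, r2 α, r1 (r2 α), r2 (r1 α), r1 (r2 (r1 α))}

lemma card_image_orbitFinset : (rootFinset.image orbitFinset).card = 31 := by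
  decide +kernel

/-- W_e = ⟨r1, r2⟩ for the A₂ sub-root-system spanned by e₁ - e₂ and e₂ - e₃ is the
symmetric group S₃ = {1, r1, r2, r1r2, r2r1, r1r2r1} (the braid relation holds), so the
W_e-orbit of α is {α, r1 α, r2 α, r1(r2 α), r2(r1 α), r1(r2(r1 α))}. The action of W_e on
the 72 roots has exactly 31 orbits. -/
theorem A2_orbits :
    (∀ β, r1 (r1 β) = β) ∧ (∀ β, r2 (r2 β) = β) ∧
    (∀ β, r1 (r2 (r1 β)) = r2 (r1 (r2 β))) ∧
    {S : Set (Fin 7 → ℤ) | ∃ α ∈ Rset,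
        S = {α, r1 α, r2 α, r1 (r2 α), r2 (r1 α), r1 (r2 (r1 α))}}.ncard = 31 := by
  refine ⟨r1_r1, r2_r2, r1_r2_r1, ?_⟩
  have horbits : {S : Set (Fin 7 → ℤ) | ∃ α ∈ Rset,
      S = {α, r1 α, r2 α, r1 (r2 α), r2 (r1 α), r1 (r2 (r1 α))}} =
      (↑) '' (↑(rootFinset.image orbitFinset) : Set (Finset (Fin 7 → ℤ))) := by
    ext S
    simp [Rset_eq_coe_rootFinset, orbitFinset, eq_comm]
  rw [horbits, Set.ncard_image_of_injective _ Finset.coe_injective, Set.ncard_coe_finset,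
    card_image_orbitFinset]
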